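/- Let α ≥ 2 be an integer and let C be a minimal d_α-D_α cut in A_α with C ≠ {d_α}. Then for every nonempty S ⊆ {1,…,α−1}: if x_{S∪{α}} ∉ C, then x_{T∪{α}} ∉ C for every nonempty proper subset T ⊂ S. -/

import Mathlib

/-!
If every neighbour of `x` other than `y` is also a neighbour of `y`, then any path through `x`
can be rerouted through `y`. So when `y` survives a cut `C`, removing `x` from `C` still
leaves a cut, and minimality forces `x ∉ C`. In `A_α` this domination holds for
`x = x_{T ∪ {α}}` and `y = x_{S ∪ {α}}` because `T ⊆ S`.
-/

/-- Raw vertex names for the auxiliary graph `A_α`: the special vertex `top = d_α`,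
vertices `d S`, and vertices `x S`. -/
inductive AV : Type where
  | top : AV
  | d : Finset ℕ → AV
  | x : Finset ℕ → AV
deriving DecidableEq

/-- The vertices actually present in `A_α`: `d_α`; `d S` for nonempty
`S ⊆ {1, …, α-1}`; and `x S` for `S ⊆ {1, …, α}` with `|S| ≥ 2`. -/
def AValid (α : ℕ) : AV → Prop
  | AV.top => True
  | AV.d S => S.Nonempty ∧ S ⊆ Finset.Icc 1 (α - 1)
  | AV.x S => 2 ≤ S.card ∧ S ⊆ Finset.Icc 1 α

/-- One-sided adjacency for `A_α`: `d_α x_S` when `α ∈ S`; `d_S x_T` when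
`S ∩ T ≠ ∅`; `x_S x_T` when `S ≠ T` and `S ∩ T ≠ ∅`. -/
def AAdj (α : ℕ) : AV → AV → Prop
  | AV.top, AV.x S => α ∈ S
  | AV.d S, AV.x T => (S ∩ T).Nonempty
  | AV.x S, AV.x T => S ≠ T ∧ (S ∩ T).Nonempty
  | _, _ => False

/-- The auxiliary graph `A_α`, on the valid vertices. -/
def Agraph (α : ℕ) : SimpleGraph {v : AV // AValid α v} where
  Adj a b := AAdj α a.1 b.1 ∨ AAdj α b.1 a.1
  symm := ⟨fun _ _ h => Or.symm h⟩
  loopless := by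
    constructor
    rintro ⟨v, hv⟩ h
    rcases v with _ | S | S <;> simp only [AAdj] at h <;> tauto

/-- The vertex `d_α` of `A_α`. -/
def dTop (α : ℕ) : {v : AV // AValid α v} := ⟨AV.top, trivial⟩

/-- The set `D_α = {d_S : S ⊆ {1, …, α-1}, S ≠ ∅}` of vertices of `A_α`. -/
def Dset (α : ℕ) : Set {v : AV // AValid α v} := {v | ∃ S, v.1 = AV.d S}

/-- `C` is an `A`-`B` cut in `G`: the graph `G - C` (i.e. the subgraph of `G`
induced on `Cᶜ`) contains no path from `A \ C` to `B \ C`. -/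
def IsCut {V : Type*} (G : SimpleGraph V) (A B C : Set V) : Prop :=
  ∀ (a b : ↥(Cᶜ : Set V)), (a : V) ∈ A → (b : V) ∈ B →
    ¬ (G.induce (Cᶜ : Set V)).Reachable a b

/-- `C` is a minimal `A`-`B` cut in `G`. -/
def IsMinimalCut {V : Type*} (G : SimpleGraph V) (A B C : Set V) : Prop :=
  IsCut G A B C ∧ ∀ x ∈ C, ¬ IsCut G A B (C \ {x})

/-- Validity of the vertex `x_{S ∪ {α}}` for nonempty `S ⊆ {1, …, α-1}`. -/
lemma aValid_x_union (α : ℕ) (hα : 2 ≤ α) (S : Finset ℕ)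
    (hS : S ⊆ Finset.Icc 1 (α - 1)) (hne : S.Nonempty) :
    AValid α (AV.x (S ∪ {α})) := by
  have hαS : α ∉ S := by
    intro h
    have := (Finset.mem_Icc.1 (hS h)).2
    omega
  constructor
  · have hcard : (S ∪ {α}).card = S.card + 1 := by
      rw [Finset.union_comm, ← Finset.insert_eq, Finset.card_insert_of_notMem hαS]
    have : 1 ≤ S.card := Finset.one_le_card.2 hne
    omega
  · refine Finset.union_subset (hS.trans (Finset.Icc_subset_Icc le_rfl (Nat.sub_le α 1))) ?_
    simp only [Finset.singleton_subset_iff, Finset.mem_Icc]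
    omega

/-- Validity of the vertex `x_R` for `R ⊆ {1, …, α-1}` with `|R| ≥ 2`. -/
lemma aValid_x_low (α : ℕ) (R : Finset ℕ) (hR : R ⊆ Finset.Icc 1 (α - 1))
    (hcard : 2 ≤ R.card) : AValid α (AV.x R) :=
  ⟨hcard, hR.trans (Finset.Icc_subset_Icc le_rfl (Nat.sub_le α 1))⟩

namespace SimpleGraph

variable {V W : Type*} {G : SimpleGraph V} {H : SimpleGraph W}

lemma Reachable.map_of_adj_imp (f : V → W)
    (hf : ∀ u v, G.Adj u v → f u = f v ∨ H.Adj (f u) (f v)) {u v : V} (h : G.Reachable u v) :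
    H.Reachable (f u) (f v) := by
  rw [reachable_iff_reflTransGen] at h ⊢
  refine h.lift' f fun a b hab => show Relation.ReflTransGen H.Adj (f a) (f b) from ?_
  rcases hf a b hab with heq | hadj
  · exact heq ▸ Relation.ReflTransGen.refl
  · exact Relation.ReflTransGen.single hadj

end SimpleGraph

section Cut

variable {V : Type*} {G : SimpleGraph V} {A B C : Set V} {x y : V}

open Classical in
lemma IsCut.diff_singleton_of_adj_imp (hC : IsCut G A B C) (hy : y ∉ C) (hxA : x ∉ A)
    (hxB : x ∉ B) (hxy : ∀ w, G.Adj x w → w = y ∨ G.Adj y w) : IsCut G A B (C \ {x}) := by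
  intro a b ha hb hab
  let g : V → V := fun v => if v = x then y else v
  have hg : ∀ v ∉ C \ {x}, g v ∉ C := fun v hv => by
    by_cases hvx : v = x
    · simpa [g, hvx] using hy
    · simpa [g, hvx] using fun hvC => hv ⟨hvC, hvx⟩
  have hg_adj : ∀ u w, G.Adj u w → g u = g w ∨ G.Adj (g u) (g w) := fun u w huw => by
    by_cases hux : u = x <;> by_cases hwx : w = x
    · exact absurd (hux.trans hwx.symm) huw.ne
    · simp only [g, if_pos hux, if_neg hwx]
      exact (hxy w (hux ▸ huw)).imp Eq.symm id
    · simp only [g, if_neg hux, if_pos hwx]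
      exact (hxy u (hwx ▸ huw.symm)).imp id fun h => h.symm
    · simp only [g, if_neg hux, if_neg hwx]
      exact Or.inr huw
  let f : ((C \ {x})ᶜ : Set V) → (Cᶜ : Set V) := fun v => ⟨g v, hg v v.2⟩
  have hf_adj : ∀ u w, (G.induce (C \ {x})ᶜ).Adj u w →
      f u = f w ∨ (G.induce Cᶜ).Adj (f u) (f w) := fun u w huw =>
    (hg_adj u w huw).imp Subtype.ext id
  have hfa : (f a : V) = a := if_neg (ne_of_mem_of_not_mem ha hxA)
  have hfb : (f b : V) = b := if_neg (ne_of_mem_of_not_mem hb hxB)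
  exact hC (f a) (f b) (hfa ▸ ha) (hfb ▸ hb) (hab.map_of_adj_imp f hf_adj)

lemma IsMinimalCut.notMem_of_adj_imp (hC : IsMinimalCut G A B C) (hy : y ∉ C) (hxA : x ∉ A)
    (hxB : x ∉ B) (hxy : ∀ w, G.Adj x w → w = y ∨ G.Adj y w) : x ∉ C :=
  fun hx => hC.2 x hx (hC.1.diff_singleton_of_adj_imp hy hxA hxB hxy)

end Cut

lemma agraph_adj_x_imp_of_subset {α : ℕ} {U W : Finset ℕ} (hU : AValid α (AV.x U))
    (hW : AValid α (AV.x W)) (hUW : U ⊆ W) (v : {v : AV // AValid α v})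
    (hv : (Agraph α).Adj ⟨AV.x U, hU⟩ v) :
    v = ⟨AV.x W, hW⟩ ∨ (Agraph α).Adj ⟨AV.x W, hW⟩ v := by
  obtain ⟨_ | R | R, _⟩ := v
  · exact Or.inr (Or.inr (hUW (by simpa [Agraph, AAdj] using hv)))
  · exact Or.inr (Or.inr ((by simpa [Agraph, AAdj] using hv : (R ∩ U).Nonempty).mono
      (Finset.inter_subset_inter_left hUW)))
  · by_cases hRW : R = W
    · exact Or.inl (by simp [hRW])
    · have hRU : (R ∩ U).Nonempty := by
        simp only [Agraph, AAdj] at hv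
        rcases hv with ⟨-, h⟩ | ⟨-, h⟩
        · rwa [Finset.inter_comm]
        · exact h
      exact Or.inr (Or.inr ⟨hRW, hRU.mono (Finset.inter_subset_inter_left hUW)⟩)

theorem cut_x_mono_general (α : ℕ) (hα : 2 ≤ α) (C : Set {v : AV // AValid α v})
    (hC : IsMinimalCut (Agraph α) {dTop α} (Dset α) C)
    (S : Finset ℕ) (hSne : S.Nonempty) (hS : S ⊆ Finset.Icc 1 (α - 1))
    (hxS : (⟨AV.x (S ∪ {α}), aValid_x_union α hα S hS hSne⟩ :
      {v : AV // AValid α v}) ∉ C)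
    (T : Finset ℕ) (hTne : T.Nonempty) (hTS : T ⊂ S) :
    (⟨AV.x (T ∪ {α}), aValid_x_union α hα T (hTS.subset.trans hS) hTne⟩ :
      {v : AV // AValid α v}) ∉ C :=
  hC.notMem_of_adj_imp hxS (by simp [dTop, Subtype.ext_iff]) (by simp [Dset])
    (agraph_adj_x_imp_of_subset _ _ (Finset.union_subset_union_left hTS.subset))

/-- Let `C` be a minimal `d_α`-`D_α` cut in `A_α` with `C ≠ {d_α}`.  If
`x_{S ∪ {α}} ∉ C` for a nonempty `S ⊆ {1, …, α-1}`, then `x_{T ∪ {α}} ∉ C` for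
every nonempty proper subset `T ⊂ S`. -/
theorem cut_x_mono (α : ℕ) (hα : 2 ≤ α) (C : Set {v : AV // AValid α v})
    (hC : IsMinimalCut (Agraph α) {dTop α} (Dset α) C) (hCne : C ≠ {dTop α})
    (S : Finset ℕ) (hSne : S.Nonempty) (hS : S ⊆ Finset.Icc 1 (α - 1))
    (hxS : (⟨AV.x (S ∪ {α}), aValid_x_union α hα S hS hSne⟩ :
      {v : AV // AValid α v}) ∉ C)
    (T : Finset ℕ) (hTne : T.Nonempty) (hTS : T ⊂ S) :
    (⟨AV.x (T ∪ {α}), aValid_x_union α hα T (hTS.subset.trans hS) hTne⟩ :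
      {v : AV // AValid α v}) ∉ C :=
  cut_x_mono_general α hα C hC S hSne hS hxS T hTne hTS
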